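/- Fix α > 0 and β ∈ ℝ and let 𝔤 = 𝔤^{α,β}_{4.6} be the 4-dimensional real Lie algebra with basis e₁,...,e₄ and nonzero brackets [e₁,e₄] = αe₁, [e₂,e₄] = βe₂ − e₃, [e₃,e₄] = e₂ + βe₃. A 4×4 real matrix R equals η·Id + D for some η ∈ ℝ and some derivation D of 𝔤 if and only if R₄₁ = R₄₂ = R₄₃ = 0, R₃₃ = R₂₂, R₃₂ = −R₂₃, βR₂₁ + R₃₁ = αR₂₁, −R₂₁ + βR₃₁ = αR₃₁, αR₁₂ = βR₁₂ − R₁₃, and αR₁₃ = R₁₂ + βR₁₃. In this case η = R₄₄. -/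

import Mathlib

/-!
Evaluating the derivation identity on the brackets `[eᵢ, e₄]` and `[e₁, eⱼ]` shows that a
derivation has zero last row and commutes, on `span {e₁, e₂, e₃}`, with `ad e₄`, whose
eigenvalues `α` and `β ± i` are distinct. So it acts by a scalar on `e₁` and by some
`!![c, d; -d, c]` on `e₂, e₃`, with an arbitrary last column vanishing at `(4, 4)`. The
off-diagonal conditions on `R` are the commutation relations, and they force the corresponding
entries to vanish, so `R - R₄₄ • 1` is a derivation.
-/

open Matrix

/-- The Lie bracket of the Lie algebra, in coordinates. -/
def br (α : ℝ) (β : ℝ) (x y : Fin 4 → ℝ) : Fin 4 → ℝ :=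
  ![α * (x 0 * y 3 - x 3 * y 0), β * (x 1 * y 3 - x 3 * y 1) + (x 2 * y 3 - x 3 * y 2), -(x 1 * y 3 - x 3 * y 1) + β * (x 2 * y 3 - x 3 * y 2), (0:ℝ)]

/-- `D` (acting via `mulVec`) is a derivation of the bracket. -/
def IsDer (α : ℝ) (β : ℝ) (D : Matrix (Fin 4) (Fin 4) ℝ) : Prop :=
  ∀ x y : Fin 4 → ℝ, D.mulVec (br α β x y) = br α β (D.mulVec x) y + br α β x (D.mulVec y)

/-- `(u, v)` would be an `α`-eigenvector of `!![β, 1; -1, β]`, whose eigenvalues `β ± i` are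
not real. -/
theorem eq_zero_of_rotation_eigen {α β u v : ℝ} (h₁ : β * u + v = α * u)
    (h₂ : -u + β * v = α * v) : u = 0 ∧ v = 0 := by
  have hu : u * (1 + (α - β) ^ 2) = 0 := by linear_combination (β - α) * h₁ - h₂
  have hu : u = 0 := (mul_eq_zero.mp hu).resolve_right (by positivity)
  exact ⟨hu, by linear_combination h₁ + (α - β) * hu⟩

theorem isDer_iff {α β : ℝ} (hα : α ≠ 0) {D : Matrix (Fin 4) (Fin 4) ℝ} :
    IsDer α β D ↔ D 3 0 = 0 ∧ D 3 1 = 0 ∧ D 3 2 = 0 ∧ D 3 3 = 0 ∧ D 2 2 = D 1 1 ∧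
      D 2 1 = -D 1 2 ∧ D 1 0 = 0 ∧ D 2 0 = 0 ∧ D 0 1 = 0 ∧ D 0 2 = 0 := by
  constructor
  · intro hD
    have e14 := hD ![1, 0, 0, 0] ![0, 0, 0, 1]
    have e24 := hD ![0, 1, 0, 0] ![0, 0, 0, 1]
    have e34 := hD ![0, 0, 1, 0] ![0, 0, 0, 1]
    have e12 := hD ![1, 0, 0, 0] ![0, 1, 0, 0]
    have e13 := hD ![1, 0, 0, 0] ![0, 0, 1, 0]
    simp [br, mulVec, dotProduct, Fin.sum_univ_four, funext_iff, Fin.forall_fin_succ, hα]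
      at e14 e24 e34 e12 e13
    obtain ⟨e14₀, e14₁, e14₂, h30⟩ := e14
    obtain ⟨e24₀, e24₁, e24₂, -⟩ := e24
    obtain ⟨e34₀, e34₁, e34₂, -⟩ := e34
    have h33 : D 3 3 = 0 := by simpa [hα] using (by linarith : α * D 3 3 = 0)
    obtain ⟨h10, h20⟩ :=
      eq_zero_of_rotation_eigen (by linarith : β * D 1 0 + D 2 0 = α * D 1 0) (by linarith)
    obtain ⟨h02, h01⟩ :=
      eq_zero_of_rotation_eigen (by linarith : β * D 0 2 + D 0 1 = α * D 0 2) (by linarith)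
    refine ⟨h30, e12.1, e13.1, h33, ?_, ?_, h10, h20, h01, h02⟩ <;> linarith
  · rintro ⟨h30, h31, h32, h33, h22, h21, h10, h20, h01, h02⟩ x y
    ext i
    fin_cases i <;> simp [br, mulVec, dotProduct, Fin.sum_univ_four, *] <;> ring

theorem stmt_16 (α : ℝ) (β : ℝ) (hα : 0 < α) (R : Matrix (Fin 4) (Fin 4) ℝ) :
    ((∃ (η : ℝ) (D : Matrix (Fin 4) (Fin 4) ℝ), IsDer α β D ∧
        R = η • (1 : Matrix (Fin 4) (Fin 4) ℝ) + D) ↔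
      (R 3 0 = 0 ∧ R 3 1 = 0 ∧ R 3 2 = 0 ∧ R 2 2 = R 1 1 ∧ R 2 1 = -R 1 2 ∧ β * R 1 0 + R 2 0 = α * R 1 0 ∧ -R 1 0 + β * R 2 0 = α * R 2 0 ∧ α * R 0 1 = β * R 0 1 - R 0 2 ∧ α * R 0 2 = R 0 1 + β * R 0 2)) ∧
    (∀ (η : ℝ) (D : Matrix (Fin 4) (Fin 4) ℝ), IsDer α β D →
      R = η • (1 : Matrix (Fin 4) (Fin 4) ℝ) + D → η = R 3 3) := by
  refine ⟨⟨?_, ?_⟩, ?_⟩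
  · rintro ⟨η, D, hD, rfl⟩
    obtain ⟨h30, h31, h32, -, h22, h21, h10, h20, h01, h02⟩ := (isDer_iff hα.ne').1 hD
    simp [one_apply, *]
  · rintro ⟨h30, h31, h32, h22, h21, hu₁, hu₂, hv₁, hv₂⟩
    obtain ⟨h10, h20⟩ := eq_zero_of_rotation_eigen hu₁ hu₂
    obtain ⟨h02, h01⟩ :=
      eq_zero_of_rotation_eigen (by linarith : β * R 0 2 + R 0 1 = α * R 0 2) (by linarith)
    refine ⟨R 3 3, R - R 3 3 • 1, (isDer_iff hα.ne').2 ?_, (add_sub_cancel _ _).symm⟩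
    simp [one_apply, *]
  · rintro η D hD rfl
    simp [((isDer_iff hα.ne').1 hD).2.2.2.1]
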